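/- Let u ∈ H²(S¹) satisfy ∫₀^{2π} u(θ)·cosθ dθ = 0 and ∫₀^{2π} u(θ)·sinθ dθ = 0. Then ∫₀^{2π} ( u''(θ)² − (5/2)u'(θ)² + (9/16)u(θ)² ) dθ ≥ (1/8)·∫₀^{2π} ( u''(θ)² + u(θ)² ) dθ. In particular the left-hand side is nonnegative, and is positive unless u ≡ 0. -/

import Mathlib

open Real MeasureTheory Set

/-- `u ∈ H²(S¹)`: `u` is a `2π`-periodic real function on `ℝ`, absolutely continuous with
(weak) derivative `u'`, which is itself absolutely continuous with (weak) derivative `u''`;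
`u`, `u'` and `u''` are square-integrable over a period. -/
def MemH2Circle (u u' u'' : ℝ → ℝ) : Prop :=
  Function.Periodic u (2 * π) ∧ Function.Periodic u' (2 * π) ∧
    Function.Periodic u'' (2 * π) ∧
  (∀ x : ℝ, u x = u 0 + ∫ t in (0:ℝ)..x, u' t) ∧
  (∀ x : ℝ, u' x = u' 0 + ∫ t in (0:ℝ)..x, u'' t) ∧
  IntervalIntegrable u' volume 0 (2 * π) ∧
  IntervalIntegrable u'' volume 0 (2 * π) ∧
  MemLp u 2 (volume.restrict (Icc 0 (2 * π))) ∧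
  MemLp u' 2 (volume.restrict (Icc 0 (2 * π))) ∧
  MemLp u'' 2 (volume.restrict (Icc 0 (2 * π)))


lemma ibp_core {T : ℝ} (hT : 0 < T) {g : ℝ → ℂ} (hgm : StronglyMeasurable g)
    (hg : IntervalIntegrable g volume 0 T) {ψ : ℝ → ℂ} (hψ : Continuous ψ) :
    ∫ x in (0:ℝ)..T, (∫ t in (0:ℝ)..x, g t) * ψ x
      = ∫ t in (0:ℝ)..T, g t * ∫ x in t..T, ψ x := by
  have h0T : (0:ℝ) ≤ T := hT.le
  have hgIoc : IntegrableOn g (Ioc 0 T) :=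
    (intervalIntegrable_iff_integrableOn_Ioc_of_le h0T).mp hg
  set μ : Measure ℝ := volume.restrict (Ioc 0 T) with hμ
  haveI : IsFiniteMeasure μ := by
    constructor
    rw [hμ, Measure.restrict_apply_univ]
    exact measure_Ioc_lt_top
  set K : ℝ × ℝ → ℂ := fun p => {q : ℝ × ℝ | q.2 ≤ q.1}.indicator (fun q => g q.2 * ψ q.1) p
    with hK
  have hSmeas : MeasurableSet {q : ℝ × ℝ | q.2 ≤ q.1} := measurableSet_le measurable_snd measurable_fst
  have hKsm : StronglyMeasurable K :=
    ((hgm.comp_measurable measurable_snd).mul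
      ((hψ.comp continuous_fst).stronglyMeasurable)).indicator hSmeas
  obtain ⟨M, hM⟩ : ∃ M, ∀ x ∈ Icc (0:ℝ) T, ‖ψ x‖ ≤ M :=
    (isCompact_Icc).exists_bound_of_continuousOn hψ.continuousOn
  have hM0 : (0:ℝ) ≤ M := le_trans (norm_nonneg _) (hM 0 ⟨le_refl _, h0T⟩)
  have hKint : Integrable K (μ.prod μ) := by
    refine Integrable.mono ((integrable_const (1:ℝ)).mul_prod (hgIoc.norm.const_mul M))
      hKsm.aestronglyMeasurable ?_
    have hmem : ∀ᵐ p ∂(μ.prod μ), p ∈ (Ioc 0 T) ×ˢ (Ioc 0 T) := by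
      rw [hμ, Measure.prod_restrict]
      exact ae_restrict_mem (measurableSet_Ioc.prod measurableSet_Ioc)
    filter_upwards [hmem] with p hp
    have h1 : ‖K p‖ ≤ ‖g p.2‖ * ‖ψ p.1‖ := by
      simp only [hK, Set.indicator_apply]
      split_ifs
      · rw [norm_mul]
      · simp [mul_nonneg, norm_nonneg]
    have h2 : ‖ψ p.1‖ ≤ M := hM p.1 (Ioc_subset_Icc_self hp.1)
    calc ‖K p‖ ≤ ‖g p.2‖ * M :=
          le_trans h1 (mul_le_mul_of_nonneg_left h2 (norm_nonneg _))
      _ ≤ ‖1 * (M * ‖g p.2‖)‖ := by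
          rw [one_mul, Real.norm_eq_abs, mul_comm]; exact le_abs_self _
  -- rewrite LHS
  have hL : ∫ x in (0:ℝ)..T, (∫ t in (0:ℝ)..x, g t) * ψ x = ∫ x, ∫ t, K (x, t) ∂μ ∂μ := by
    rw [intervalIntegral.integral_of_le h0T]
    refine setIntegral_congr_fun measurableSet_Ioc (fun x hx => ?_)
    have : ∀ t, K (x, t) = (Iic x).indicator (fun t => g t * ψ x) t := by
      intro t
      simp only [hK, Set.indicator_apply, mem_setOf_eq, mem_Iic]
    simp_rw [this]
    rw [MeasureTheory.integral_indicator measurableSet_Iic, hμ,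
      Measure.restrict_restrict measurableSet_Iic]
    have hseteq : Iic x ∩ Ioc 0 T = Ioc 0 x := by
      ext y
      simp only [mem_inter_iff, mem_Iic, mem_Ioc]
      exact ⟨fun ⟨h1, h2, h3⟩ => ⟨h2, h1⟩, fun ⟨h1, h2⟩ => ⟨h2, h1, le_trans h2 hx.2⟩⟩
    rw [hseteq, MeasureTheory.integral_mul_const, ← intervalIntegral.integral_of_le hx.1.le]
  -- rewrite RHS
  have hR : ∫ t in (0:ℝ)..T, g t * ∫ x in t..T, ψ x = ∫ t, ∫ x, K (x, t) ∂μ ∂μ := by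
    rw [intervalIntegral.integral_of_le h0T]
    refine setIntegral_congr_fun measurableSet_Ioc (fun t ht => ?_)
    have : ∀ x, K (x, t) = (Ici t).indicator (fun x => g t * ψ x) x := by
      intro x
      simp only [hK, Set.indicator_apply, mem_setOf_eq, mem_Ici]
    simp_rw [this]
    rw [MeasureTheory.integral_indicator measurableSet_Ici, hμ,
      Measure.restrict_restrict measurableSet_Ici]
    have hseteq : Ici t ∩ Ioc 0 T = Icc t T := by
      ext y
      simp only [mem_inter_iff, mem_Ici, mem_Ioc, mem_Icc]
      exact ⟨fun ⟨h1, h2, h3⟩ => ⟨h1, h3⟩, fun ⟨h1, h2⟩ => ⟨h1, lt_of_lt_of_le ht.1 h1, h2⟩⟩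
    rw [hseteq, MeasureTheory.integral_const_mul, integral_Icc_eq_integral_Ioc,
      ← intervalIntegral.integral_of_le ht.2]
  rw [hL, hR]
  exact MeasureTheory.integral_integral_swap hKint

lemma ibp {T : ℝ} (hT : 0 < T) {g : ℝ → ℂ} (hg : IntervalIntegrable g volume 0 T)
    (c : ℂ) {ψ : ℝ → ℂ} (hψ : Continuous ψ) :
    ∫ x in (0:ℝ)..T, (c + ∫ t in (0:ℝ)..x, g t) * ψ x
      = c * (∫ x in (0:ℝ)..T, ψ x) + ∫ t in (0:ℝ)..T, g t * ∫ x in t..T, ψ x := by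
  obtain ⟨hg1, hg2⟩ := hg
  have hae : g =ᵐ[volume.restrict (Ioc 0 T)] hg1.aestronglyMeasurable.mk g :=
    hg1.aestronglyMeasurable.ae_eq_mk
  set g₁ : ℝ → ℂ := hg1.aestronglyMeasurable.mk g with hg₁def
  have hg₁sm : StronglyMeasurable g₁ := hg1.aestronglyMeasurable.stronglyMeasurable_mk
  have hg₁int : IntervalIntegrable g₁ volume 0 T := by
    constructor
    · exact hg1.congr hae
    · have : Ioc T (0:ℝ) = ∅ := Ioc_eq_empty (by linarith)
      rw [this]
      exact integrableOn_empty
  have key : ∀ x, 0 ≤ x → x ≤ T → (∫ t in (0:ℝ)..x, g t) = ∫ t in (0:ℝ)..x, g₁ t := by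
    intro x hx0 hxT
    apply intervalIntegral.integral_congr_ae
    rw [uIoc_of_le hx0]
    exact ae_imp_of_ae_restrict
      (ae_restrict_of_ae_restrict_of_subset (Ioc_subset_Ioc_right hxT) hae)
  have hstep1 : ∫ x in (0:ℝ)..T, (c + ∫ t in (0:ℝ)..x, g t) * ψ x
      = ∫ x in (0:ℝ)..T, (c + ∫ t in (0:ℝ)..x, g₁ t) * ψ x := by
    apply intervalIntegral.integral_congr_ae
    rw [uIoc_of_le hT.le]
    refine Filter.Eventually.of_forall (fun x hx => ?_)
    rw [key x hx.1.le hx.2]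
  have hPcont : ContinuousOn (fun x => ∫ t in (0:ℝ)..x, g₁ t) (uIcc 0 T) := by
    apply intervalIntegral.continuousOn_primitive_interval
    rw [uIcc_of_le hT.le]
    rw [integrableOn_Icc_iff_integrableOn_Ioc]
    exact hg₁int.1
  have int2 : IntervalIntegrable (fun x => (∫ t in (0:ℝ)..x, g₁ t) * ψ x) volume 0 T :=
    (hPcont.mul hψ.continuousOn).intervalIntegrable
  have int1 : IntervalIntegrable (fun x => c * ψ x) volume 0 T :=
    (continuous_const.mul hψ).intervalIntegrable 0 T
  rw [hstep1]
  simp_rw [add_mul]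
  rw [intervalIntegral.integral_add int1 int2, intervalIntegral.integral_const_mul,
    ibp_core hT hg₁sm hg₁int hψ]
  congr 1
  apply intervalIntegral.integral_congr_ae
  rw [uIoc_of_le hT.le]
  filter_upwards [ae_imp_of_ae_restrict hae] with t ht hmem
  rw [ht hmem]

noncomputable def fc (f : ℝ → ℂ) (n : ℤ) : ℂ :=
  ∫ x in (0:ℝ)..(2*π), f x * Complex.exp (-(n:ℂ) * Complex.I * x)

lemma fc_def (f : ℝ → ℂ) (n : ℤ) :
    fc f n = ∫ x in (0:ℝ)..(2*π), f x * Complex.exp (-(n:ℂ) * Complex.I * x) := rfl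

lemma liftIoc_aeeq (f g₁ : ℝ → ℂ)
    (hae : f =ᵐ[volume.restrict (Ioc 0 (2*π))] g₁) :
    haveI : Fact ((0:ℝ) < 2*π) := ⟨by positivity⟩
    (AddCircle.liftIoc (2*π) 0 f) =ᵐ[(volume : Measure (AddCircle (2*π)))]
      (AddCircle.liftIoc (2*π) 0 g₁) := by
  haveI : Fact ((0:ℝ) < 2*π) := ⟨by positivity⟩
  set ν := volume.restrict (Ioc (0:ℝ) (2*π)) with hν
  have hnull : ν {x | f x ≠ g₁ x} = 0 := hae
  set D := toMeasurable ν {x | f x ≠ g₁ x} with hD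
  have hDmeas : MeasurableSet D := measurableSet_toMeasurable _ _
  have hDnull : ν D = 0 := by rw [hD, measure_toMeasurable]; exact hnull
  have hDvol : volume (D ∩ Ioc 0 (2*π)) = 0 := by
    rw [← Measure.restrict_apply hDmeas]; exact hDnull
  -- the "representative point" map
  set xbar : AddCircle (2*π) → ℝ := fun z => (AddCircle.equivIoc (2*π) 0 z : ℝ) with hxbar
  have hxbar_meas : Measurable xbar :=
    measurable_subtype_coe.comp (AddCircle.measurableEquivIoc (2*π) 0).measurable
  have hxbar_mem : ∀ z, xbar z ∈ Ioc 0 (0 + 2*π) := fun z => (AddCircle.equivIoc (2*π) 0 z).2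
  have hxbar_mk : ∀ a : ℝ, a ∈ Ioc 0 (0 + 2*π) → xbar (a : AddCircle (2*π)) = a := by
    intro a ha
    exact AddCircle.liftIoc_coe_apply (f := fun x : ℝ => x) ha
  have hsub : {z : AddCircle (2*π) | AddCircle.liftIoc (2*π) 0 f z ≠ AddCircle.liftIoc (2*π) 0 g₁ z}
      ⊆ xbar ⁻¹' D := by
    intro z hz
    have h1 : AddCircle.liftIoc (2*π) 0 f z = f (xbar z) := rfl
    have h2 : AddCircle.liftIoc (2*π) 0 g₁ z = g₁ (xbar z) := rfl
    have : f (xbar z) ≠ g₁ (xbar z) := by rw [← h1, ← h2]; exact hz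
    exact subset_toMeasurable _ _ this
  have hpre : volume (xbar ⁻¹' D) = 0 := by
    have hmp := AddCircle.measurePreserving_mk (2*π) 0
    have hmeas : MeasurableSet (xbar ⁻¹' D) := hxbar_meas hDmeas
    rw [← hmp.map_eq, Measure.map_apply AddCircle.measurable_mk' hmeas,
      Measure.restrict_apply (AddCircle.measurable_mk' hmeas)]
    have hseteq : (QuotientAddGroup.mk ⁻¹' (xbar ⁻¹' D)) ∩ Ioc 0 (0 + 2*π)
        = D ∩ Ioc 0 (0 + 2*π) := by
      ext a
      simp only [mem_inter_iff, mem_preimage]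
      constructor
      · rintro ⟨h1, h2⟩; rw [hxbar_mk a h2] at h1; exact ⟨h1, h2⟩
      · rintro ⟨h1, h2⟩; refine ⟨?_, h2⟩; rw [hxbar_mk a h2]; exact h1
    rw [hseteq]
    rw [zero_add]
    exact hDvol
  exact measure_mono_null hsub hpre

lemma parseval_fc (f : ℝ → ℂ) (hf : MemLp f 2 (volume.restrict (Ioc 0 (2*π)))) :
    Summable (fun n : ℤ => ‖fc f n‖^2) ∧
    ∑' n : ℤ, ‖fc f n‖^2 = (2*π) * ∫ x in (0:ℝ)..(2*π), ‖f x‖^2 := by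
  haveI hfact : Fact ((0:ℝ) < 2*π) := ⟨by positivity⟩
  have hπ : (0:ℝ) < 2*π := by positivity
  set ν := volume.restrict (Ioc (0:ℝ) (2*π)) with hν
  set F := AddCircle.liftIoc (2*π) 0 f with hF
  -- strongly measurable modification
  obtain ⟨g₁, hg₁sm, hae⟩ := hf.aestronglyMeasurable
  have hG₁sm : StronglyMeasurable (AddCircle.liftIoc (2*π) 0 g₁) :=
    (hg₁sm.comp_measurable measurable_subtype_coe).comp_measurable
      (AddCircle.measurableEquivIoc (2*π) 0).measurable
  have hFaesm : AEStronglyMeasurable F (volume : Measure (AddCircle (2*π))) :=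
    ⟨AddCircle.liftIoc (2*π) 0 g₁, hG₁sm, liftIoc_aeeq f g₁ hae⟩
  -- F ∘ mk agrees with f a.e.
  have hcomp : (F ∘ (QuotientAddGroup.mk : ℝ → AddCircle (2*π))) =ᵐ[ν] f := by
    rw [hν]
    filter_upwards [self_mem_ae_restrict (measurableSet_Ioc (a := (0:ℝ)) (b := 2*π))]
      with a ha
    exact AddCircle.liftIoc_coe_apply (by rwa [zero_add])
  -- MemLp on the circle
  have hmp := AddCircle.measurePreserving_mk (2*π) 0
  have hFvol : MemLp F 2 (volume : Measure (AddCircle (2*π))) := by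
    rw [← hmp.map_eq]
    refine (memLp_map_measure_iff (by rw [hmp.map_eq]; exact hFaesm)
      AddCircle.measurable_mk'.aemeasurable).mpr ?_
    refine (hf.ae_eq hcomp.symm).mono_measure (le_of_eq ?_)
    rw [hν, zero_add]
  have hFhaar : MemLp F 2 (AddCircle.haarAddCircle (T := 2*π)) := by
    have : (AddCircle.haarAddCircle (T := 2*π))
        = (ENNReal.ofReal (2*π))⁻¹ • (volume : Measure (AddCircle (2*π))) := by
      rw [AddCircle.volume_eq_smul_haarAddCircle, smul_smul,
        ENNReal.inv_mul_cancel (by simp [hπ, Real.pi_pos]) ENNReal.ofReal_ne_top, one_smul]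
    rw [this]
    exact hFvol.smul_measure (ENNReal.inv_ne_top.mpr (by simp [hπ, Real.pi_pos]))
  set fLp := hFhaar.toLp F with hfLp
  have hcoe : ⇑fLp =ᵐ[AddCircle.haarAddCircle (T := 2*π)] F := hFhaar.coeFn_toLp
  -- coefficients
  have hcoeff : ∀ n : ℤ, fourierCoeff (⇑fLp) n = (1/(2*π) : ℝ) • fc f n := by
    intro n
    have e1 : fourierCoeff (⇑fLp) n = fourierCoeff F n := by
      unfold fourierCoeff
      apply MeasureTheory.integral_congr_ae
      filter_upwards [hcoe] with t ht
      rw [ht]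
    have e2 : fourierCoeff F n = fourierCoeffOn (lt_add_of_pos_right 0 hfact.out) f n :=
      fourierCoeff_liftIoc_eq f n
    rw [e1, e2, fourierCoeffOn_eq_integral]
    have hπC : (π:ℂ) ≠ 0 := Complex.ofReal_ne_zero.mpr Real.pi_ne_zero
    have hI : (∫ x in (0:ℝ)..(0+2*π),
        (fourier (-n) (x : AddCircle ((0:ℝ)+2*π-0))) • f x) = fc f n := by
      rw [show (0:ℝ)+2*π = 2*π from zero_add _, fc_def]
      apply intervalIntegral.integral_congr
      intro x hx
      simp only []
      rw [fourier_coe_apply, smul_eq_mul, mul_comm]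
      congr 2
      push_cast
      field_simp [hπC]
      ring
    rw [hI]
    congr 1
    norm_num
  -- Parseval
  have hpars := tsum_sq_fourierCoeff fLp
  -- integral over the circle of ‖F‖²
  have hIvol : (∫ t, ‖F t‖^2 ∂(volume : Measure (AddCircle (2*π))))
      = ∫ x in (0:ℝ)..(2*π), ‖f x‖^2 := by
    rw [← AddCircle.integral_preimage (2*π) 0 (fun z => ‖F z‖^2)]
    have : ∀ a ∈ Ioc (0:ℝ) (0 + 2*π), ‖F (a : AddCircle (2*π))‖^2 = ‖f a‖^2 := by
      intro a ha
      rw [hF, AddCircle.liftIoc_coe_apply ha]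
    rw [setIntegral_congr_fun measurableSet_Ioc this, zero_add,
      ← intervalIntegral.integral_of_le hπ.le]
  have hIhaar : (∫ t, ‖F t‖^2 ∂(volume : Measure (AddCircle (2*π))))
      = (2*π) * ∫ t, ‖F t‖^2 ∂(AddCircle.haarAddCircle (T := 2*π)) := by
    rw [AddCircle.volume_eq_smul_haarAddCircle, MeasureTheory.integral_smul_measure,
      ENNReal.toReal_ofReal hπ.le, smul_eq_mul]
  have hInt : (∫ t, ‖(fLp : AddCircle (2*π) → ℂ) t‖^2 ∂(AddCircle.haarAddCircle (T := 2*π)))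
      = ∫ t, ‖F t‖^2 ∂(AddCircle.haarAddCircle (T := 2*π)) := by
    apply MeasureTheory.integral_congr_ae
    filter_upwards [hcoe] with t ht
    rw [ht]
  -- summability
  have hsum0 : Summable (fun i : ℤ => ‖fourierCoeff (⇑fLp) i‖ ^ 2) := by
    have h1 : Memℓp (⇑(fourierBasis.repr fLp)) 2 := lp.memℓp _
    have h2 := (memℓp_gen_iff (p := 2) (by norm_num)).mp h1
    refine h2.congr (fun i => ?_)
    rw [show ((2:ENNReal)).toReal = ((2:ℕ):ℝ) by norm_num, Real.rpow_natCast,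
      fourierBasis_repr]
  have hterm : ∀ n : ℤ, ‖fourierCoeff (⇑fLp) n‖ ^ 2 = (1/(2*π))^2 * ‖fc f n‖^2 := by
    intro n
    rw [hcoeff n, norm_smul, mul_pow]
    congr 2
    rw [Real.norm_eq_abs, abs_of_pos (by positivity)]
  -- conclude
  have hsum : Summable (fun n : ℤ => ‖fc f n‖^2) := by
    have := hsum0.mul_left ((2*π)^2)
    refine this.congr (fun n => ?_)
    rw [hterm n]
    field_simp
  refine ⟨hsum, ?_⟩
  have htsum : ∑' n : ℤ, ‖fourierCoeff (⇑fLp) n‖ ^ 2 = (1/(2*π))^2 * ∑' n : ℤ, ‖fc f n‖^2 := by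
    rw [← tsum_mul_left]
    exact tsum_congr hterm
  rw [htsum, hInt] at hpars
  have h2π : (2*π) ≠ 0 := by positivity
  have : (2*π) * ∫ t, ‖F t‖^2 ∂(AddCircle.haarAddCircle (T := 2*π))
      = ∫ x in (0:ℝ)..(2*π), ‖f x‖^2 := by rw [← hIhaar, hIvol]
  calc ∑' n : ℤ, ‖fc f n‖^2 = (2*π)^2 * ((1/(2*π))^2 * ∑' n : ℤ, ‖fc f n‖^2) := by
        field_simp
    _ = (2*π) * ((2*π) * ∫ t, ‖F t‖^2 ∂(AddCircle.haarAddCircle (T := 2*π))) := by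
        rw [hpars]; ring
    _ = (2*π) * ∫ x in (0:ℝ)..(2*π), ‖f x‖^2 := by rw [this]

lemma fc_zero (f : ℝ → ℂ) : fc f 0 = ∫ x in (0:ℝ)..(2*π), f x := by
  rw [fc_def]
  apply intervalIntegral.integral_congr
  intro x _
  simp


lemma fc_prim {g : ℝ → ℂ} (hg : IntervalIntegrable g volume 0 (2*π)) (c : ℂ) {n : ℤ}
    (hn : n ≠ 0) :
    fc (fun x => c + ∫ t in (0:ℝ)..x, g t) n
      = ((n:ℂ) * Complex.I)⁻¹ * (fc g n - ∫ t in (0:ℝ)..(2*π), g t) := by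
  have hπ : (0:ℝ) < 2*π := by positivity
  have hnC : ((n:ℂ)) ≠ 0 := Int.cast_ne_zero.mpr hn
  have hm0 : -(n:ℂ) * Complex.I ≠ 0 :=
    mul_ne_zero (neg_ne_zero.mpr hnC) Complex.I_ne_zero
  have hψ : Continuous fun x : ℝ => Complex.exp (-(n:ℂ) * Complex.I * x) :=
    Complex.continuous_exp.comp (continuous_const.mul Complex.continuous_ofReal)
  have h2πexp : Complex.exp (-(n:ℂ) * Complex.I * ((2*π : ℝ) : ℂ)) = 1 := by
    rw [← Complex.exp_int_mul_two_pi_mul_I (-n)]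
    congr 1
    push_cast
    ring
  have hIψ : ∀ t : ℝ, (∫ x in t..(2*π), Complex.exp (-(n:ℂ) * Complex.I * x))
      = (1 - Complex.exp (-(n:ℂ) * Complex.I * t)) / (-(n:ℂ) * Complex.I) := by
    intro t
    rw [integral_exp_mul_complex hm0, h2πexp]
  have h0ψ : (∫ x in (0:ℝ)..(2*π), Complex.exp (-(n:ℂ) * Complex.I * x)) = 0 := by
    rw [hIψ 0]
    simp
  rw [fc_def, ibp hπ hg c hψ, h0ψ, mul_zero, zero_add]
  have hstep : ∀ t ∈ uIcc (0:ℝ) (2*π),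
      g t * ∫ x in t..(2*π), Complex.exp (-(n:ℂ) * Complex.I * x)
        = (g t - g t * Complex.exp (-(n:ℂ) * Complex.I * t)) * (-(n:ℂ) * Complex.I)⁻¹ := by
    intro t _
    rw [hIψ t]
    field_simp
  rw [intervalIntegral.integral_congr hstep, intervalIntegral.integral_mul_const,
    intervalIntegral.integral_sub hg (hg.mul_continuousOn hψ.continuousOn), ← fc_def]
  have hinv : (-(n:ℂ) * Complex.I)⁻¹ = -(((n:ℂ) * Complex.I)⁻¹) := by
    rw [neg_mul, inv_neg]
  rw [hinv]
  ring

lemma ofReal_II {f : ℝ → ℝ} {a b : ℝ} (h : IntervalIntegrable f volume a b) :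
    IntervalIntegrable (fun x => ((f x : ℝ) : ℂ)) volume a b :=
  ⟨h.1.ofReal, h.2.ofReal⟩

lemma normsq_ofReal (f : ℝ → ℝ) :
    (∫ x in (0:ℝ)..(2*π), ‖((f x : ℝ) : ℂ)‖^2) = ∫ x in (0:ℝ)..(2*π), f x^2 := by
  apply intervalIntegral.integral_congr
  intro x _
  simp only [Complex.norm_real, Real.norm_eq_abs, sq_abs]


lemma wirtinger4 {v v' : ℝ → ℝ}
    (hv'int : IntervalIntegrable v' volume 0 (2*π))
    (hrep : ∀ x, v x = v 0 + ∫ t in (0:ℝ)..x, v' t)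
    (hL2v : MemLp v 2 (volume.restrict (Ioc 0 (2*π))))
    (hL2v' : MemLp v' 2 (volume.restrict (Ioc 0 (2*π))))
    (hmeanv : (∫ t in (0:ℝ)..(2*π), v t) = 0)
    (hmeanv' : (∫ t in (0:ℝ)..(2*π), v' t) = 0)
    (h1 : fc (fun x => ((v x : ℝ) : ℂ)) 1 = 0)
    (hm1 : fc (fun x => ((v x : ℝ) : ℂ)) (-1) = 0) :
    4 * ∫ x in (0:ℝ)..(2*π), v x^2 ≤ ∫ x in (0:ℝ)..(2*π), v' x^2 := by
  have hπ : (0:ℝ) < 2*π := by positivity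
  set vC : ℝ → ℂ := fun x => ((v x : ℝ) : ℂ) with hvC
  set v'C : ℝ → ℂ := fun x => ((v' x : ℝ) : ℂ) with hv'C
  have hv'Cint : IntervalIntegrable v'C volume 0 (2*π) := ofReal_II hv'int
  have hmeanC : (∫ t in (0:ℝ)..(2*π), vC t) = 0 := by
    rw [hvC, intervalIntegral.integral_ofReal, hmeanv, Complex.ofReal_zero]
  have hmeanC' : (∫ t in (0:ℝ)..(2*π), v'C t) = 0 := by
    rw [hv'C, intervalIntegral.integral_ofReal, hmeanv', Complex.ofReal_zero]
  have hrepC : vC = fun x => ((v 0 : ℝ) : ℂ) + ∫ t in (0:ℝ)..x, v'C t := by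
    funext x
    rw [hvC]
    simp only [hv'C, intervalIntegral.integral_ofReal]
    rw [hrep x]
    push_cast
    ring
  have hrel : ∀ n : ℤ, fc v'C n = ((n:ℂ) * Complex.I) * fc vC n := by
    intro n
    by_cases hn : n = 0
    · subst hn
      rw [fc_zero, hmeanC', fc_zero, hmeanC]
      simp
    · have hkey : fc vC n = ((n:ℂ) * Complex.I)⁻¹ * (fc v'C n - ∫ t in (0:ℝ)..(2*π), v'C t) := by
        conv_lhs => rw [hrepC]
        exact fc_prim hv'Cint _ hn
      rw [hmeanC', sub_zero] at hkey
      rw [hkey]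
      have hnI : ((n:ℂ) * Complex.I) ≠ 0 :=
        mul_ne_zero (Int.cast_ne_zero.mpr hn) Complex.I_ne_zero
      field_simp
  have hfc0 : fc vC 0 = 0 := by rw [fc_zero, hmeanC]
  obtain ⟨hS, hP⟩ := parseval_fc vC hL2v.ofReal
  obtain ⟨hS', hP'⟩ := parseval_fc v'C hL2v'.ofReal
  have hterm : ∀ n : ℤ, 4 * ‖fc vC n‖^2 ≤ ‖fc v'C n‖^2 := by
    intro n
    rw [hrel n, norm_mul, mul_pow]
    have hnrm : ‖(n:ℂ) * Complex.I‖^2 = ((n:ℝ))^2 := by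
      rw [norm_mul, Complex.norm_I, mul_one, Complex.norm_intCast, sq_abs]
    rw [hnrm]
    by_cases h0 : n = 0
    · subst h0; rw [hfc0]; norm_num
    by_cases hone : n = 1
    · subst hone; rw [h1]; norm_num
    by_cases hmone : n = -1
    · subst hmone; rw [hm1]; norm_num
    have h2 : (2:ℝ) ≤ |(n:ℝ)| := by
      have : (2:ℤ) ≤ |n| := by rcases abs_cases n with ⟨he, _⟩ | ⟨he, _⟩ <;> omega
      calc (2:ℝ) = ((2:ℤ):ℝ) := by norm_num
        _ ≤ ((|n|:ℤ):ℝ) := by exact_mod_cast this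
        _ = |(n:ℝ)| := by push_cast; rfl
    have h4 : (4:ℝ) ≤ ((n:ℝ))^2 := by nlinarith [sq_abs (n:ℝ), abs_nonneg (n:ℝ)]
    exact mul_le_mul_of_nonneg_right h4 (sq_nonneg _)
  have hsum := Summable.tsum_le_tsum hterm (hS.mul_left 4) hS'
  rw [tsum_mul_left, hP, hP'] at hsum
  rw [hvC, normsq_ofReal] at hsum
  rw [hv'C, normsq_ofReal] at hsum
  nlinarith [hsum, Real.pi_pos]

/-- Fourier coefficient of the (weak) derivative. -/
lemma fc_deriv {v v' : ℝ → ℝ} (hv'int : IntervalIntegrable v' volume 0 (2*π))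
    (hrep : ∀ x, v x = v 0 + ∫ t in (0:ℝ)..x, v' t)
    (hmeanv' : (∫ t in (0:ℝ)..(2*π), v' t) = 0) {n : ℤ} (hn : n ≠ 0) :
    fc (fun x => ((v' x : ℝ) : ℂ)) n = ((n:ℂ) * Complex.I) * fc (fun x => ((v x : ℝ) : ℂ)) n := by
  have hmeanC' : (∫ t in (0:ℝ)..(2*π), ((v' t : ℝ) : ℂ)) = 0 := by
    rw [intervalIntegral.integral_ofReal, hmeanv', Complex.ofReal_zero]
  have hrepC : (fun x => ((v x : ℝ) : ℂ))
      = fun x => ((v 0 : ℝ) : ℂ) + ∫ t in (0:ℝ)..x, ((v' t : ℝ) : ℂ) := by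
    funext x
    simp only [intervalIntegral.integral_ofReal]
    rw [hrep x]
    push_cast
    ring
  have hkey : fc (fun x => ((v x : ℝ) : ℂ)) n
      = ((n:ℂ) * Complex.I)⁻¹ * (fc (fun x => ((v' x : ℝ) : ℂ)) n
        - ∫ t in (0:ℝ)..(2*π), ((v' t : ℝ) : ℂ)) := by
    conv_lhs => rw [hrepC]
    exact fc_prim (ofReal_II hv'int) _ hn
  rw [hmeanC', sub_zero] at hkey
  rw [hkey]
  have hnI : ((n:ℂ) * Complex.I) ≠ 0 :=
    mul_ne_zero (Int.cast_ne_zero.mpr hn) Complex.I_ne_zero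
  field_simp


set_option maxHeartbeats 1000000 in
/-- The coercivity estimate (5.1) of the paper: for `u ∈ H²(S¹)` orthogonal to
`cos θ` and `sin θ`,
`∫ (u''² − (5/2)u'² + (9/16)u²) ≥ (1/8)·∫ (u''² + u²)`;
in particular the left-hand side is nonnegative, and positive unless `u ≡ 0`. -/
theorem coercivity_estimate
    (u u' u'' : ℝ → ℝ) (hu : MemH2Circle u u' u'')
    (hcos : (∫ θ in (0:ℝ)..(2 * π), u θ * Real.cos θ) = 0)
    (hsin : (∫ θ in (0:ℝ)..(2 * π), u θ * Real.sin θ) = 0) :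
    ((∫ θ in (0:ℝ)..(2 * π),
        ((u'' θ) ^ 2 - (5/2) * (u' θ) ^ 2 + (9/16) * (u θ) ^ 2)) ≥
      (1/8) * ∫ θ in (0:ℝ)..(2 * π), ((u'' θ) ^ 2 + (u θ) ^ 2)) ∧
    (0 ≤ ∫ θ in (0:ℝ)..(2 * π),
        ((u'' θ) ^ 2 - (5/2) * (u' θ) ^ 2 + (9/16) * (u θ) ^ 2)) ∧
    ((¬ ∀ θ : ℝ, u θ = 0) →
      0 < ∫ θ in (0:ℝ)..(2 * π),
        ((u'' θ) ^ 2 - (5/2) * (u' θ) ^ 2 + (9/16) * (u θ) ^ 2)) := by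
  obtain ⟨hp, hp', hp'', hrep, hrep', hint', hint'', hL2, hL2', hL2''⟩ := hu
  have hπ : (0:ℝ) < 2*π := by positivity
  haveI hfin : IsFiniteMeasure (volume.restrict (Icc (0:ℝ) (2*π))) :=
    ⟨by rw [Measure.restrict_apply_univ]; exact measure_Icc_lt_top⟩
  have hIccIoc : ∀ {f : ℝ → ℝ}, Integrable f (volume.restrict (Icc (0:ℝ) (2*π))) →
      IntervalIntegrable f volume 0 (2*π) := by
    intro f hf
    rw [intervalIntegrable_iff_integrableOn_Ioc_of_le hπ.le]
    exact hf.mono_measure (Measure.restrict_mono Ioc_subset_Icc_self le_rfl)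
  have hu_int : IntervalIntegrable u volume 0 (2*π) := hIccIoc (hL2.integrable one_le_two)
  have hu2 : IntervalIntegrable (fun x => u x^2) volume 0 (2*π) := hIccIoc hL2.integrable_sq
  have hu'2 : IntervalIntegrable (fun x => u' x^2) volume 0 (2*π) := hIccIoc hL2'.integrable_sq
  have hu''2 : IntervalIntegrable (fun x => u'' x^2) volume 0 (2*π) := hIccIoc hL2''.integrable_sq
  set A := ∫ θ in (0:ℝ)..(2*π), u'' θ^2 with hA
  set B := ∫ θ in (0:ℝ)..(2*π), u' θ^2 with hB
  set C := ∫ θ in (0:ℝ)..(2*π), u θ^2 with hC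
  have hA0 : 0 ≤ A := intervalIntegral.integral_nonneg hπ.le (fun x _ => sq_nonneg _)
  have hB0 : 0 ≤ B := intervalIntegral.integral_nonneg hπ.le (fun x _ => sq_nonneg _)
  have hC0 : 0 ≤ C := intervalIntegral.integral_nonneg hπ.le (fun x _ => sq_nonneg _)
  -- means of derivatives vanish
  have h2per : u (2*π) = u 0 := by simpa using hp 0
  have h2per' : u' (2*π) = u' 0 := by simpa using hp' 0
  have hmean' : (∫ t in (0:ℝ)..(2*π), u' t) = 0 := by
    have h := hrep (2*π)
    rw [h2per] at h
    linarith
  have hmean'' : (∫ t in (0:ℝ)..(2*π), u'' t) = 0 := by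
    have h := hrep' (2*π)
    rw [h2per'] at h
    linarith
  -- Fourier coefficients of u at ±1 vanish
  have hint_ucos : IntervalIntegrable (fun x => u x * Real.cos x) volume 0 (2*π) :=
    hu_int.mul_continuousOn Real.continuous_cos.continuousOn
  have hint_usin : IntervalIntegrable (fun x => u x * Real.sin x) volume 0 (2*π) :=
    hu_int.mul_continuousOn Real.continuous_sin.continuousOn
  have hfcu1 : fc (fun x => ((u x : ℝ) : ℂ)) 1 = 0 := by
    rw [fc_def]
    have hpt : ∀ x ∈ uIcc (0:ℝ) (2*π),
        ((u x : ℝ) : ℂ) * Complex.exp (-(((1:ℤ)):ℂ) * Complex.I * x)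
          = ((u x * Real.cos x : ℝ) : ℂ) - ((u x * Real.sin x : ℝ) : ℂ) * Complex.I := by
      intro x _
      have he : Complex.exp (-(((1:ℤ)):ℂ) * Complex.I * x)
          = Complex.cos (-(x:ℂ)) + Complex.sin (-(x:ℂ)) * Complex.I := by
        rw [← Complex.exp_mul_I]
        congr 1
        push_cast
        ring
      rw [he, Complex.cos_neg, Complex.sin_neg]
      push_cast [Complex.ofReal_cos, Complex.ofReal_sin]
      ring
    rw [intervalIntegral.integral_congr hpt,
      intervalIntegral.integral_sub (ofReal_II hint_ucos)
        ((ofReal_II hint_usin).mul_const Complex.I),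
      intervalIntegral.integral_mul_const, intervalIntegral.integral_ofReal,
      intervalIntegral.integral_ofReal, hcos, hsin]
    simp
  have hfcum1 : fc (fun x => ((u x : ℝ) : ℂ)) (-1) = 0 := by
    rw [fc_def]
    have hpt : ∀ x ∈ uIcc (0:ℝ) (2*π),
        ((u x : ℝ) : ℂ) * Complex.exp (-(((-1:ℤ)):ℂ) * Complex.I * x)
          = ((u x * Real.cos x : ℝ) : ℂ) + ((u x * Real.sin x : ℝ) : ℂ) * Complex.I := by
      intro x _
      have he : Complex.exp (-(((-1:ℤ)):ℂ) * Complex.I * x)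
          = Complex.cos ((x:ℂ)) + Complex.sin ((x:ℂ)) * Complex.I := by
        rw [← Complex.exp_mul_I]
        congr 1
        push_cast
        ring
      rw [he]
      push_cast [Complex.ofReal_cos, Complex.ofReal_sin]
      ring
    rw [intervalIntegral.integral_congr hpt,
      intervalIntegral.integral_add (ofReal_II hint_ucos)
        ((ofReal_II hint_usin).mul_const Complex.I),
      intervalIntegral.integral_mul_const, intervalIntegral.integral_ofReal,
      intervalIntegral.integral_ofReal, hcos, hsin]
    simp
  -- Fourier coefficients of u' at ±1 vanish
  have hfc1 : fc (fun x => ((u' x : ℝ) : ℂ)) 1 = 0 := by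
    rw [fc_deriv hint' hrep hmean' one_ne_zero, hfcu1, mul_zero]
  have hfcm1 : fc (fun x => ((u' x : ℝ) : ℂ)) (-1) = 0 := by
    rw [fc_deriv hint' hrep hmean' (by norm_num : (-1:ℤ) ≠ 0), hfcum1, mul_zero]
  -- MemLp on Ioc
  have hmono : volume.restrict (Ioc (0:ℝ) (2*π)) ≤ volume.restrict (Icc (0:ℝ) (2*π)) :=
    Measure.restrict_mono Ioc_subset_Icc_self le_rfl
  -- main estimate A ≥ 4 B
  have hAB : 4 * B ≤ A :=
    wirtinger4 hint'' hrep' (hL2'.mono_measure hmono) (hL2''.mono_measure hmono)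
      hmean' hmean'' hfc1 hfcm1
  -- splitting of the integrals
  have hsplit : (∫ θ in (0:ℝ)..(2 * π),
        ((u'' θ) ^ 2 - (5/2) * (u' θ) ^ 2 + (9/16) * (u θ) ^ 2))
      = A - (5/2) * B + (9/16) * C := by
    rw [intervalIntegral.integral_add ((hu''2).sub ((hu'2).const_mul (5/2)))
        ((hu2).const_mul (9/16)),
      intervalIntegral.integral_sub hu''2 ((hu'2).const_mul (5/2)),
      intervalIntegral.integral_const_mul, intervalIntegral.integral_const_mul]
  have hsplit2 : (∫ θ in (0:ℝ)..(2 * π), ((u'' θ) ^ 2 + (u θ) ^ 2)) = A + C :=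
    intervalIntegral.integral_add hu''2 hu2
  refine ⟨by rw [hsplit, hsplit2]; linarith, by rw [hsplit]; linarith, ?_⟩
  -- positivity
  intro hne
  push_neg at hne
  obtain ⟨θ₀, hθ₀⟩ := hne
  -- reduce to a point in (0, 2π]
  set k : ℤ := ⌈θ₀ / (2*π)⌉ - 1 with hk
  set θ₁ : ℝ := θ₀ - (k:ℝ) * (2*π) with hθ₁
  have hθ₁val : u θ₁ = u θ₀ := hp.sub_int_mul_eq k
  have hθ₀eq : θ₀ = θ₀ / (2*π) * (2*π) := (div_mul_cancel₀ _ (ne_of_gt hπ)).symm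
  have hceil1 : ((⌈θ₀ / (2*π)⌉ : ℤ) : ℝ) < θ₀ / (2*π) + 1 := Int.ceil_lt_add_one _
  have hceil2 : θ₀ / (2*π) ≤ ((⌈θ₀ / (2*π)⌉ : ℤ) : ℝ) := Int.le_ceil _
  have hkcast : (k:ℝ) = ((⌈θ₀ / (2*π)⌉ : ℤ) : ℝ) - 1 := by rw [hk]; push_cast; ring
  have hθ₁pos : 0 < θ₁ := by
    rw [hθ₁, hkcast]
    nlinarith [hceil1, hπ, hθ₀eq]
  have hθ₁le : θ₁ ≤ 2*π := by
    rw [hθ₁, hkcast]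
    nlinarith [hceil2, hπ, hθ₀eq]
  have hθ₁ne : u θ₁ ≠ 0 := by rw [hθ₁val]; exact hθ₀
  -- continuity of u on [0, 2π]
  have hucont : ContinuousOn u (Icc 0 (2*π)) := by
    have hprim : ContinuousOn (fun x => u 0 + ∫ t in (0:ℝ)..x, u' t) (Icc 0 (2*π)) := by
      apply ContinuousOn.add continuousOn_const
      have := intervalIntegral.continuousOn_primitive_interval
        (f := u') (a := 0) (b := 2*π) (μ := volume) ?_
      · rwa [uIcc_of_le hπ.le] at this
      · rw [uIcc_of_le hπ.le, integrableOn_Icc_iff_integrableOn_Ioc]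
        exact hint'.1
    exact hprim.congr (fun x _ => hrep x)
  -- a small interval where u² is bounded below
  set ε : ℝ := |u θ₁| / 2 with hε
  have hεpos : 0 < ε := by
    rw [hε]
    have := abs_pos.mpr hθ₁ne
    linarith
  have hcw : ContinuousWithinAt u (Icc 0 (2*π)) θ₁ :=
    hucont θ₁ ⟨hθ₁pos.le, hθ₁le⟩
  have hev : ∀ᶠ x in nhdsWithin θ₁ (Icc 0 (2*π)), ε < |u x| := by
    have hopen : IsOpen {y : ℝ | ε < |y|} := isOpen_lt continuous_const continuous_abs
    have hmemv : u θ₁ ∈ {y : ℝ | ε < |y|} := by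
      show ε < |u θ₁|
      rw [hε]
      have := abs_pos.mpr hθ₁ne
      linarith
    exact (hcw.eventually (hopen.eventually_mem hmemv)).mono (fun x hx => hx)
  rw [Filter.eventually_iff, Metric.mem_nhdsWithin_iff] at hev
  obtain ⟨δ, hδpos, hδ⟩ := hev
  set a : ℝ := max (θ₁ - δ/2) (θ₁/2) with ha
  have haθ : a < θ₁ := max_lt (by linarith) (by linarith)
  have ha0 : 0 < a := lt_of_lt_of_le (by linarith) (le_max_right _ _)
  have hbound : ∀ x ∈ Icc a θ₁, ε^2 ≤ u x^2 := by
    intro x hx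
    have hx1 : x ∈ Metric.ball θ₁ δ := by
      rw [Metric.mem_ball, Real.dist_eq, abs_sub_lt_iff]
      constructor
      · linarith [hx.2]
      · have h1 : θ₁ - δ/2 ≤ a := le_max_left _ _
        have := hx.1
        linarith
    have hx2 : x ∈ Icc 0 (2*π) := ⟨le_trans ha0.le hx.1, le_trans hx.2 hθ₁le⟩
    have hgt : ε < |u x| := hδ ⟨hx1, hx2⟩
    calc ε^2 ≤ |u x|^2 := by nlinarith [abs_nonneg (u x)]
      _ = u x^2 := sq_abs _
  -- C is positive
  have hCsub : ∀ {c d : ℝ}, c ∈ Icc (0:ℝ) (2*π) → d ∈ Icc (0:ℝ) (2*π) →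
      IntervalIntegrable (fun x => u x^2) volume c d := by
    intro c d hc hd
    apply hu2.mono_set
    exact uIcc_subset_uIcc (by rw [uIcc_of_le hπ.le]; exact hc)
      (by rw [uIcc_of_le hπ.le]; exact hd)
  have hmem_a : a ∈ Icc (0:ℝ) (2*π) := ⟨ha0.le, by linarith⟩
  have hmem_θ₁ : θ₁ ∈ Icc (0:ℝ) (2*π) := ⟨hθ₁pos.le, hθ₁le⟩
  have hmem_0 : (0:ℝ) ∈ Icc (0:ℝ) (2*π) := ⟨le_refl _, hπ.le⟩
  have hmem_2π : (2*π) ∈ Icc (0:ℝ) (2*π) := ⟨hπ.le, le_refl _⟩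
  have hsplitC : C = (∫ x in (0:ℝ)..a, u x^2) + ((∫ x in a..θ₁, u x^2)
      + ∫ x in θ₁..(2*π), u x^2) := by
    rw [intervalIntegral.integral_add_adjacent_intervals (hCsub hmem_a hmem_θ₁)
      (hCsub hmem_θ₁ hmem_2π),
      intervalIntegral.integral_add_adjacent_intervals (hCsub hmem_0 hmem_a)
      (hCsub hmem_a hmem_2π)]
  have hmid : ε^2 * (θ₁ - a) ≤ ∫ x in a..θ₁, u x^2 := by
    have := intervalIntegral.integral_mono_on haθ.le
      (intervalIntegrable_const (c := ε^2)) (hCsub hmem_a hmem_θ₁) hbound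
    rwa [intervalIntegral.integral_const, smul_eq_mul, mul_comm] at this
  have hleft : 0 ≤ ∫ x in (0:ℝ)..a, u x^2 :=
    intervalIntegral.integral_nonneg ha0.le (fun x _ => sq_nonneg _)
  have hright : 0 ≤ ∫ x in θ₁..(2*π), u x^2 :=
    intervalIntegral.integral_nonneg hθ₁le (fun x _ => sq_nonneg _)
  have hCpos : 0 < C := by
    have hpos : 0 < ε^2 * (θ₁ - a) := mul_pos (pow_pos hεpos 2) (by linarith)
    rw [hsplitC]
    linarith
  rw [hsplit]
  linarith
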